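/- arXiv:2311.05194 — 2 statements merged into one kernel-verified Lean document; each statement's English description precedes it below -/
import Mathlib

section
/- For a finite simple connected weighted graph G, a vertex x, and f : V → ℝ with f(x) = 0, the iterated carré du champ satisfies 2Γ₂(f)(x) = (1/ω(x)) Σ_{v∼x} Σ_{u∼v} (ω_{xv}ω_{uv}/ω(v))[½(f(u) − f(v))² − f(u)f(v)] + (1/(2ω(x))) Σ_{v∼x} ω_{xv} f(v)² + (1/ω(x)²)(Σ_{v∼x} ω_{xv} f(v))². -/
open Finset

noncomputable def vWeight {V : Type*} [Fintype V] (G : SimpleGraph V) [DecidableRel G.Adj]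
    (w : V → V → ℝ) (x : V) : ℝ :=
  ∑ v ∈ univ.filter (fun v => G.Adj x v), w x v

noncomputable def lap {V : Type*} [Fintype V] (G : SimpleGraph V) [DecidableRel G.Adj]
    (w : V → V → ℝ) (f : V → ℝ) (x : V) : ℝ :=
  (1 / vWeight G w x) * ∑ v ∈ univ.filter (fun v => G.Adj x v), w x v * (f v - f x)

noncomputable def gam {V : Type*} [Fintype V] (G : SimpleGraph V) [DecidableRel G.Adj]
    (w : V → V → ℝ) (f g : V → ℝ) (x : V) : ℝ :=
  (1 / (2 * vWeight G w x)) *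
    ∑ v ∈ univ.filter (fun v => G.Adj x v), w x v * (f v - f x) * (g v - g x)

/-- `2Γ₂(f)(x)`, where `2Γ₂(f) := Δ(Γ(f,f)) − 2Γ(f, Δf)`, has the stated explicit form
at a vertex `x` where `f x = 0`. -/
theorem stmt3 {V : Type*} [Fintype V] (G : SimpleGraph V) [DecidableRel G.Adj]
    (hconn : G.Connected) (w : V → V → ℝ)
    (hsymm : ∀ x y, w x y = w y x)
    (hpos : ∀ x y, G.Adj x y → 0 < w x y)
    (f : V → ℝ) (x : V) (hf : f x = 0) :
    lap G w (gam G w f f) x - 2 * gam G w f (lap G w f) x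
      = (1 / vWeight G w x) *
          ∑ v ∈ univ.filter (fun v => G.Adj x v),
            ∑ u ∈ univ.filter (fun u => G.Adj v u),
              (w x v * w u v / vWeight G w v) * ((1/2) * (f u - f v) ^ 2 - f u * f v)
        + (1 / (2 * vWeight G w x)) *
            ∑ v ∈ univ.filter (fun v => G.Adj x v), w x v * f v ^ 2
        + (1 / (vWeight G w x) ^ 2) *
            (∑ v ∈ univ.filter (fun v => G.Adj x v), w x v * f v) ^ 2 := by
  classical
  by_cases hx : (univ.filter (fun v => G.Adj x v)).Nonempty
  · have hD : vWeight G w x ≠ 0 :=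
      ne_of_gt (Finset.sum_pos (fun v hv => hpos x v (by simpa using hv)) hx)
    have key : ∀ v ∈ univ.filter (fun v => G.Adj x v),
        w x v * gam G w f f v - w x v * f v * lap G w f v
        = (∑ u ∈ univ.filter (fun u => G.Adj v u),
            (w x v * w u v / vWeight G w v) * ((1/2) * (f u - f v) ^ 2 - f u * f v))
          + w x v * f v ^ 2 := by
      intro v hv
      have hadj : G.Adj x v := by simpa using hv
      have hdv : vWeight G w v ≠ 0 :=
        ne_of_gt (Finset.sum_pos (fun u hu => hpos v u (by simpa using hu))
          ⟨x, by simp [hadj.symm]⟩)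
      have hC : ∑ u ∈ univ.filter (fun u => G.Adj v u),
            (w x v * w u v / vWeight G w v) * ((1/2) * (f u - f v) ^ 2 - f u * f v)
          = (1 / vWeight G w v) * ∑ u ∈ univ.filter (fun u => G.Adj v u),
              w x v * w v u * ((1/2) * (f u - f v) ^ 2 - f u * f v) := by
        rw [Finset.mul_sum]
        refine Finset.sum_congr rfl fun u hu => ?_
        rw [hsymm u v]; ring
      have hsum : (∑ u ∈ univ.filter (fun u => G.Adj v u), w v u) = vWeight G w v := rfl
      rw [hC, gam, lap]
      calc w x v * ((1 / (2 * vWeight G w v)) *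
              ∑ u ∈ univ.filter (fun u => G.Adj v u), w v u * (f u - f v) * (f u - f v))
            - w x v * f v * ((1 / vWeight G w v) *
              ∑ u ∈ univ.filter (fun u => G.Adj v u), w v u * (f u - f v))
          = (1 / vWeight G w v) *
              ((∑ u ∈ univ.filter (fun u => G.Adj v u),
                  w v u * (f u - f v) * (f u - f v)) * (w x v * (1/2))
               - (w x v * f v) *
                 ∑ u ∈ univ.filter (fun u => G.Adj v u), w v u * (f u - f v)) := by
            ring
        _ = (1 / vWeight G w v) *
              (∑ u ∈ univ.filter (fun u => G.Adj v u),
                (w x v * w v u * ((1/2) * (f u - f v) ^ 2 - f u * f v)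
                  + w x v * f v ^ 2 * w v u)) := by
            rw [Finset.sum_mul, Finset.mul_sum, ← Finset.sum_sub_distrib]
            exact congrArg _ (Finset.sum_congr rfl fun u hu => by ring)
        _ = (1 / vWeight G w v) *
              ((∑ u ∈ univ.filter (fun u => G.Adj v u),
                  w x v * w v u * ((1/2) * (f u - f v) ^ 2 - f u * f v))
                + w x v * f v ^ 2 * vWeight G w v) := by
            rw [Finset.sum_add_distrib, ← Finset.mul_sum, hsum]
        _ = (∑ u ∈ univ.filter (fun u => G.Adj v u),
                  w x v * w v u * ((1/2) * (f u - f v) ^ 2 - f u * f v))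
                * (1 / vWeight G w v) + w x v * f v ^ 2 := by
            field_simp
            congr 1
            exact Finset.sum_congr rfl fun u hu => by ring
        _ = (1 / vWeight G w v) * (∑ u ∈ univ.filter (fun u => G.Adj v u),
                  w x v * w v u * ((1/2) * (f u - f v) ^ 2 - f u * f v))
              + w x v * f v ^ 2 := by ring
    have main : (∑ v ∈ univ.filter (fun v => G.Adj x v), w x v * gam G w f f v)
        - (∑ v ∈ univ.filter (fun v => G.Adj x v), w x v * f v * lap G w f v)
        = (∑ v ∈ univ.filter (fun v => G.Adj x v),
            ∑ u ∈ univ.filter (fun u => G.Adj v u),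
              (w x v * w u v / vWeight G w v) * ((1/2) * (f u - f v) ^ 2 - f u * f v))
          + ∑ v ∈ univ.filter (fun v => G.Adj x v), w x v * f v ^ 2 := by
      rw [← Finset.sum_sub_distrib, Finset.sum_congr rfl key, Finset.sum_add_distrib]
    have hW : (∑ v ∈ univ.filter (fun v => G.Adj x v), w x v) = vWeight G w x := rfl
    have hgamx : gam G w f f x
        = (1 / (2 * vWeight G w x)) *
            ∑ v ∈ univ.filter (fun v => G.Adj x v), w x v * f v ^ 2 := by
      rw [gam]
      congr 1
      refine Finset.sum_congr rfl fun v hv => ?_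
      rw [hf]; ring
    have hlapx : lap G w f x
        = (1 / vWeight G w x) *
            ∑ v ∈ univ.filter (fun v => G.Adj x v), w x v * f v := by
      rw [lap]
      congr 1
      refine Finset.sum_congr rfl fun v hv => ?_
      rw [hf]; ring
    have e1 : ∑ v ∈ univ.filter (fun v => G.Adj x v),
          w x v * (gam G w f f v - gam G w f f x)
        = (∑ v ∈ univ.filter (fun v => G.Adj x v), w x v * gam G w f f v)
          - vWeight G w x * gam G w f f x := by
      rw [← hW, Finset.sum_mul, ← Finset.sum_sub_distrib]
      exact Finset.sum_congr rfl fun v hv => by ring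
    have e2 : ∑ v ∈ univ.filter (fun v => G.Adj x v),
          w x v * f v * (lap G w f v - lap G w f x)
        = (∑ v ∈ univ.filter (fun v => G.Adj x v), w x v * f v * lap G w f v)
          - (∑ v ∈ univ.filter (fun v => G.Adj x v), w x v * f v) * lap G w f x := by
      rw [Finset.sum_mul, ← Finset.sum_sub_distrib]
      exact Finset.sum_congr rfl fun v hv => by ring
    have hA : lap G w (gam G w f f) x
        = (1 / vWeight G w x) * ∑ v ∈ univ.filter (fun v => G.Adj x v),
            w x v * (gam G w f f v - gam G w f f x) := by
      rw [lap]
    have hB : gam G w f (lap G w f) x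
        = (1 / (2 * vWeight G w x)) * ∑ v ∈ univ.filter (fun v => G.Adj x v),
            w x v * f v * (lap G w f v - lap G w f x) := by
      rw [gam]
      exact congrArg _ (Finset.sum_congr rfl fun v hv => by rw [hf]; ring)
    rw [hA, hB, e1, e2, hgamx, hlapx]
    have hmain' : (∑ v ∈ univ.filter (fun v => G.Adj x v), w x v * gam G w f f v)
        = (∑ v ∈ univ.filter (fun v => G.Adj x v),
            ∑ u ∈ univ.filter (fun u => G.Adj v u),
              (w x v * w u v / vWeight G w v) * ((1/2) * (f u - f v) ^ 2 - f u * f v))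
          + (∑ v ∈ univ.filter (fun v => G.Adj x v), w x v * f v ^ 2)
          + (∑ v ∈ univ.filter (fun v => G.Adj x v), w x v * f v * lap G w f v) := by
      linarith [main]
    rw [hmain']
    field_simp
    ring
  · rw [Finset.not_nonempty_iff_eq_empty] at hx
    simp [lap, gam, hx]
end

section
/- For the weighted umbrella graph G_{3,ρ} (hub v₀ joined to v₁,v₂,v₃ by edges of weight 1, and rim edges [v₁v₂],[v₂v₃],[v₃v₁] of weight ρ > 0) and any f : V → ℝ with f(v₀) = 0, writing αᵢ = f(vᵢ), one has Γ(f)(v₀) = (1/6)(α₁² + α₂² + α₃²) and Γ₂(f)(v₀) = (ρ/(6(1+2ρ)) + 2/9)Σᵢαᵢ² + (1/9)Σ_{i<j}αᵢαⱼ − (2ρ/(3(1+2ρ)))(α₁α₂ + α₂α₃ + α₃α₁). -/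
open Finset

/-- Edge weights of the umbrella graph `G_{3,ρ}` on vertices `v₀,v₁,v₂,v₃`:
hub edges `[v₀vᵢ]` have weight 1, rim edges weight `ρ`. -/
noncomputable def w3 (ρ : ℝ) : Fin 4 → Fin 4 → ℝ :=
  fun i j => if i = j then 0 else if i = 0 ∨ j = 0 then 1 else ρ

/-!
`G_{3,ρ}` is a complete graph with the diagonal weights zero, so every operator at a vertex is a
weighted sum over all four vertices, normalised by `ω(v₀) = 3` or `ω(vᵢ) = 1 + 2ρ`. `Γ₂(f)(v₀)`
involves only `Γ(f)` and `Δf` at the four vertices, whose closed forms reduce the claim to a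
rational identity in `ρ` and the `αᵢ`.
-/

section CompleteGraph

variable {V : Type*} [Fintype V] [DecidableEq V]

lemma sum_filter_top_adj {x : V} {h : V → ℝ} (hx : h x = 0) :
    ∑ v ∈ univ.filter (fun v => (⊤ : SimpleGraph V).Adj x v), h v = ∑ v, h v :=
  sum_filter_of_ne fun v _ hv => (SimpleGraph.top_adj x v).2 fun hxv => hv (hxv ▸ hx)

variable (w : V → V → ℝ) (x : V)

lemma vWeight_top (hw : w x x = 0) : vWeight ⊤ w x = ∑ v, w x v :=
  sum_filter_top_adj hw

lemma lap_top (hw : w x x = 0) (f : V → ℝ) :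
    lap ⊤ w f x = (∑ v, w x v * (f v - f x)) / ∑ v, w x v := by
  rw [lap, vWeight_top w x hw, sum_filter_top_adj (by simp), one_div_mul_eq_div]

lemma gam_top (hw : w x x = 0) (f g : V → ℝ) :
    gam ⊤ w f g x = (∑ v, w x v * (f v - f x) * (g v - g x)) / (2 * ∑ v, w x v) := by
  rw [gam, vWeight_top w x hw, sum_filter_top_adj (by simp), one_div_mul_eq_div]

end CompleteGraph

section Umbrella

variable (ρ : ℝ)

lemma w3_self (i : Fin 4) : w3 ρ i i = 0 := if_pos rfl

lemma sum_w3_hub_mul (h : Fin 4 → ℝ) : ∑ v, w3 ρ 0 v * h v = h 1 + h 2 + h 3 := by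
  simp [w3, Fin.sum_univ_four]

lemma sum_w3_rim_mul {i : Fin 4} (hi : i ≠ 0) (h : Fin 4 → ℝ) :
    ∑ v, w3 ρ i v * h v = h 0 + ρ * (h 1 + h 2 + h 3 - h i) := by
  fin_cases i <;> simp_all [w3, Fin.sum_univ_four] <;> ring

lemma sum_w3_hub : ∑ v, w3 ρ 0 v = 3 := by
  rw [← Finset.sum_congr rfl fun v _ => mul_one (w3 ρ 0 v), sum_w3_hub_mul]
  norm_num

lemma sum_w3_rim {i : Fin 4} (hi : i ≠ 0) : ∑ v, w3 ρ i v = 1 + 2 * ρ := by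
  rw [← Finset.sum_congr rfl fun v _ => mul_one (w3 ρ i v), sum_w3_rim_mul ρ hi]
  norm_num
  ring

variable (f g : Fin 4 → ℝ)

lemma lap_w3_hub : lap ⊤ (w3 ρ) f 0 = (f 1 + f 2 + f 3 - 3 * f 0) / 3 := by
  rw [lap_top _ _ (w3_self ρ 0), sum_w3_hub_mul, sum_w3_hub]
  ring

lemma lap_w3_rim {i : Fin 4} (hi : i ≠ 0) :
    lap ⊤ (w3 ρ) f i = (f 0 - f i + ρ * (f 1 + f 2 + f 3 - 3 * f i)) / (1 + 2 * ρ) := by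
  rw [lap_top _ _ (w3_self ρ i), sum_w3_rim_mul ρ hi, sum_w3_rim ρ hi]
  ring

lemma gam_w3_hub : gam ⊤ (w3 ρ) f g 0 =
    ((f 1 - f 0) * (g 1 - g 0) + (f 2 - f 0) * (g 2 - g 0) + (f 3 - f 0) * (g 3 - g 0)) / 6 := by
  simp_rw [gam_top _ _ (w3_self ρ 0), mul_assoc, sum_w3_hub_mul, sum_w3_hub]
  ring

lemma gam_w3_rim {i : Fin 4} (hi : i ≠ 0) : gam ⊤ (w3 ρ) f g i =
    ((f 0 - f i) * (g 0 - g i) + ρ * ((f 1 - f i) * (g 1 - g i) + (f 2 - f i) * (g 2 - g i)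
      + (f 3 - f i) * (g 3 - g i))) / (2 * (1 + 2 * ρ)) := by
  simp_rw [gam_top _ _ (w3_self ρ i), mul_assoc, sum_w3_rim_mul ρ hi, sum_w3_rim ρ hi]
  ring

end Umbrella

theorem stmt5 (ρ : ℝ) (hρ : 0 < ρ) (f : Fin 4 → ℝ) (hf : f 0 = 0) :
    gam (⊤ : SimpleGraph (Fin 4)) (w3 ρ) f f 0
      = (1/6) * (f 1 ^ 2 + f 2 ^ 2 + f 3 ^ 2) ∧
    (1/2) * (lap (⊤ : SimpleGraph (Fin 4)) (w3 ρ) (gam ⊤ (w3 ρ) f f) 0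
        - 2 * gam (⊤ : SimpleGraph (Fin 4)) (w3 ρ) f (lap ⊤ (w3 ρ) f) 0)
      = (ρ / (6 * (1 + 2 * ρ)) + 2/9) * (f 1 ^ 2 + f 2 ^ 2 + f 3 ^ 2)
        + (1/9) * (f 1 * f 2 + f 1 * f 3 + f 2 * f 3)
        - (2 * ρ / (3 * (1 + 2 * ρ))) * (f 1 * f 2 + f 2 * f 3 + f 3 * f 1) := by
  have h1 : (1 : Fin 4) ≠ 0 := by decide
  have h2 : (2 : Fin 4) ≠ 0 := by decide
  have h3 : (3 : Fin 4) ≠ 0 := by decide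
  have hρ' : 1 + 2 * ρ ≠ 0 := by positivity
  refine ⟨by rw [gam_w3_hub, hf]; ring, ?_⟩
  rw [lap_w3_hub, gam_w3_hub, gam_w3_hub, gam_w3_rim ρ f f h1, gam_w3_rim ρ f f h2,
    gam_w3_rim ρ f f h3, lap_w3_hub, lap_w3_rim ρ f h1, lap_w3_rim ρ f h2, lap_w3_rim ρ f h3, hf]
  field_simp
  ring
end
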